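/- Consider ẋ = f(t,x,u(t)) with f : ℝ≥0 × ℝⁿ × ℝᵏ → ℝⁿ continuous. Let ‖·‖_X be a norm on ℝⁿ with compatible weak pairing ⟦·,·⟧_X satisfying the curve norm derivative formula, let ‖·‖_U be a norm on ℝᵏ, and let c, ℓ > 0 be such that: (A1) ⟦f(t,x,u) − f(t,y,u), x − y⟧_X ≤ −c‖x − y‖_X² for all t ≥ 0, x, y ∈ ℝⁿ, u ∈ ℝᵏ; (A2) ‖f(t,x,u) − f(t,x,v)‖_X ≤ ℓ‖u − v‖_U for all t ≥ 0, x ∈ ℝⁿ, u, v ∈ ℝᵏ. Then: (i) any two continuously differentiable solutions x(t), y(t) with continuous inputs u_x, u_y satisfy D⁺‖x(t) − y(t)‖_X ≤ −c‖x(t) − y(t)‖_X + ℓ‖u_x(t) − u_y(t)‖_U for all t ≥ 0; and (ii) from any initial conditions x₀, y₀ ∈ ℝⁿ at time 0, ‖x(t) − y(t)‖_X ≤ e^{−ct}‖x₀ − y₀‖_X + (ℓ(1 − e^{−ct})/c)·sup_{τ∈[0,t]} ‖u_x(τ) − u_y(τ)‖_U. -/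

import Mathlib

open Filter Topology MeasureTheory

/-- The upper right Dini derivative `D⁺φ(t) = limsup_{h→0⁺} (φ(t+h)−φ(t))/h`. -/
noncomputable def DiniUpper (φ : ℝ → ℝ) (t : ℝ) : ℝ :=
  Filter.limsup (fun h : ℝ => (φ (t + h) - φ t) / h) (nhdsWithin 0 (Set.Ioi 0))

/-- `ν` is a norm on `ℝⁿ`. -/
structure IsNorm {n : ℕ} (ν : (Fin n → ℝ) → ℝ) : Prop where
  pos : ∀ x, x ≠ 0 → 0 < ν x
  homog : ∀ (a : ℝ) (x : Fin n → ℝ), ν (a • x) = |a| * ν x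
  triangle : ∀ x y, ν (x + y) ≤ ν x + ν y

/-- `P` is a weak pairing on `ℝⁿ`. -/
structure IsWeakPairing {n : ℕ} (P : (Fin n → ℝ) → (Fin n → ℝ) → ℝ) : Prop where
  subadd : ∀ x₁ x₂ y, P (x₁ + x₂) y ≤ P x₁ y + P x₂ y
  cont : ∀ y, Continuous fun x => P x y
  homog_left : ∀ (a : ℝ), 0 ≤ a → ∀ x y, P (a • x) y = a * P x y
  homog_right : ∀ (a : ℝ), 0 ≤ a → ∀ x y, P x (a • y) = a * P x y
  neg_neg : ∀ x y, P (-x) (-y) = P x y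
  posdef : ∀ x, x ≠ 0 → 0 < P x x
  cauchySchwarz : ∀ x y, |P x y| ≤ Real.sqrt (P x x) * Real.sqrt (P y y)

/-- A weak pairing `P` is compatible with the norm `ν`. -/
def Compatible {n : ℕ} (ν : (Fin n → ℝ) → ℝ)
    (P : (Fin n → ℝ) → (Fin n → ℝ) → ℝ) : Prop :=
  ∀ x, P x x = (ν x) ^ 2

/-- Deimling's inequality: `⟦x,y⟧ ≤ ‖y‖ · lim_{h→0⁺}(‖y+hx‖−‖y‖)/h`
(the one-sided limit exists for every norm). -/
def DeimlingIneq {n : ℕ} (ν : (Fin n → ℝ) → ℝ)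
    (P : (Fin n → ℝ) → (Fin n → ℝ) → ℝ) : Prop :=
  ∀ x y L, Filter.Tendsto (fun h : ℝ => (ν (y + h • x) - ν y) / h)
      (nhdsWithin 0 (Set.Ioi 0)) (nhds L) → P x y ≤ ν y * L

/-- The curve norm derivative formula: for any differentiable curve,
`‖x(t)‖ D⁺‖x(t)‖ = ⟦ẋ(t), x(t)⟧` for a.e. `t`. -/
def CurveNormDerivFormula {n : ℕ} (ν : (Fin n → ℝ) → ℝ)
    (P : (Fin n → ℝ) → (Fin n → ℝ) → ℝ) : Prop :=
  ∀ (a b : ℝ) (x x' : ℝ → Fin n → ℝ),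
    (∀ t ∈ Set.Ioo a b, HasDerivAt x (x' t) t) →
    ∀ᵐ t ∂(volume : Measure ℝ), t ∈ Set.Ioo a b →
      ν (x t) * DiniUpper (fun s => ν (x s)) t = P (x' t) (x t)

/-- The operator norm on matrices induced by the norm `ν` on `ℝⁿ`. -/
noncomputable def opNorm {n : ℕ} (ν : (Fin n → ℝ) → ℝ)
    (A : Matrix (Fin n) (Fin n) ℝ) : ℝ :=
  sSup ((fun x => ν (A.mulVec x)) '' {x | ν x = 1})

/-- `m` is the matrix measure of `A` induced by `ν`:
`m = lim_{h→0⁺} (‖I + hA‖ − 1)/h`. -/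
def HasMatrixMeasure {n : ℕ} (ν : (Fin n → ℝ) → ℝ)
    (A : Matrix (Fin n) (Fin n) ℝ) (m : ℝ) : Prop :=
  Filter.Tendsto
    (fun h : ℝ => (opNorm ν ((1 : Matrix (Fin n) (Fin n) ℝ) + h • A) - 1) / h)
    (nhdsWithin 0 (Set.Ioi 0)) (nhds m)

section aux
variable {n : ℕ} {ν : (Fin n → ℝ) → ℝ}

lemma IsNorm.zero' (h : IsNorm ν) : ν 0 = 0 := by
  have := h.homog 0 0; simpa using this

lemma IsNorm.nonneg' (h : IsNorm ν) (x : Fin n → ℝ) : 0 ≤ ν x := by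
  rcases eq_or_ne x 0 with rfl | hx
  · rw [h.zero']
  · exact (h.pos x hx).le

lemma IsNorm.neg' (h : IsNorm ν) (x : Fin n → ℝ) : ν (-x) = ν x := by
  have := h.homog (-1) x; simpa using this

lemma IsNorm.sub_le' (h : IsNorm ν) (a b : Fin n → ℝ) : ν a - ν b ≤ ν (a - b) := by
  have := h.triangle (a - b) b
  rw [sub_add_cancel] at this
  linarith

lemma IsNorm.exists_bound' (h : IsNorm ν) : ∃ C : ℝ, 0 ≤ C ∧ ∀ x, ν x ≤ C * ‖x‖ := by
  refine ⟨∑ i, ν (Pi.single i 1), Finset.sum_nonneg fun i _ => h.nonneg' _, fun x => ?_⟩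
  have hx : x = ∑ i, x i • (Pi.single i (1:ℝ) : Fin n → ℝ) := by
    funext j
    simp [Finset.sum_apply, Pi.single_apply]
  calc ν x = ν (∑ i, x i • (Pi.single i (1:ℝ) : Fin n → ℝ)) := by rw [← hx]
    _ ≤ ∑ i, ν (x i • (Pi.single i (1:ℝ) : Fin n → ℝ)) :=
        Finset.le_sum_of_subadditive ν h.zero'.le h.triangle _ _
    _ = ∑ i, |x i| * ν (Pi.single i 1) := by simp [h.homog]
    _ ≤ ∑ i, ‖x‖ * ν (Pi.single i 1) := by
        refine Finset.sum_le_sum fun i _ => mul_le_mul_of_nonneg_right ?_ (h.nonneg' _)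
        simpa using norm_le_pi_norm x i
    _ = (∑ i, ν (Pi.single i 1)) * ‖x‖ := by rw [Finset.sum_mul]; simp [mul_comm]

lemma IsNorm.continuous' (h : IsNorm ν) : Continuous ν := by
  obtain ⟨C, hC0, hC⟩ := h.exists_bound'
  refine LipschitzWith.continuous (K := ⟨C, hC0⟩) (LipschitzWith.of_dist_le_mul fun a b => ?_)
  rw [Real.dist_eq, dist_eq_norm]
  have h1 : ν a - ν b ≤ ν (a - b) := h.sub_le' a b
  have h2 : ν b - ν a ≤ ν (a - b) := by
    have := h.sub_le' b a
    rwa [show b - a = -(a - b) by abel, h.neg'] at this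
  have h3 := hC (a - b)
  rw [abs_le]
  change -(C * ‖a - b‖) ≤ ν a - ν b ∧ ν a - ν b ≤ C * ‖a - b‖
  constructor <;> linarith

end aux

/-- Theorem 39 (i)-(ii): incremental input-to-state stability of strongly
contracting systems with inputs. -/
theorem incremental_ISS_of_contracting {n k : ℕ}
    (f : ℝ → (Fin n → ℝ) → (Fin k → ℝ) → Fin n → ℝ)
    (νX : (Fin n → ℝ) → ℝ) (PX : (Fin n → ℝ) → (Fin n → ℝ) → ℝ)
    (νU : (Fin k → ℝ) → ℝ) (c ℓ : ℝ)
    -- `f` is continuous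
    (hf : Continuous fun p : ℝ × (Fin n → ℝ) × (Fin k → ℝ) => f p.1 p.2.1 p.2.2)
    -- norms and weak pairing, with the curve norm derivative formula
    (hνX : IsNorm νX) (hPX : IsWeakPairing PX) (hcomp : Compatible νX PX)
    (hCNDF : CurveNormDerivFormula νX PX) (hνU : IsNorm νU)
    (hc : 0 < c) (hℓ : 0 < ℓ)
    -- (A1) strong contractivity uniformly in the input
    (hA1 : ∀ t, 0 ≤ t → ∀ (x y : Fin n → ℝ) (u : Fin k → ℝ),
      PX (f t x u - f t y u) (x - y) ≤ -c * νX (x - y) ^ 2)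
    -- (A2) Lipschitz dependence on the input
    (hA2 : ∀ t, 0 ≤ t → ∀ (x : Fin n → ℝ) (u v : Fin k → ℝ),
      νX (f t x u - f t x v) ≤ ℓ * νU (u - v))
    -- two solutions with continuous inputs
    (x y : ℝ → Fin n → ℝ) (ux uy : ℝ → Fin k → ℝ)
    (hux : Continuous ux) (huy : Continuous uy)
    (hx : ∀ t, 0 ≤ t → HasDerivAt x (f t (x t) (ux t)) t)
    (hy : ∀ t, 0 ≤ t → HasDerivAt y (f t (y t) (uy t)) t) :
    -- (i) Dini derivative estimate
    (∀ t, 0 ≤ t →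
      DiniUpper (fun s => νX (x s - y s)) t
        ≤ -c * νX (x t - y t) + ℓ * νU (ux t - uy t)) ∧
    -- (ii) incremental input-to-state stability
    (∀ t, 0 ≤ t →
      νX (x t - y t)
        ≤ Real.exp (-c * t) * νX (x 0 - y 0)
          + ℓ * (1 - Real.exp (-c * t)) / c *
            sSup ((fun τ => νU (ux τ - uy τ)) '' Set.Icc 0 t)) := by
  have hνX0 : νX 0 = 0 := hνX.zero'
  have hνXc : Continuous νX := hνX.continuous'
  have hνUc : Continuous νU := hνU.continuous'
  have hxc : ∀ t, 0 ≤ t → ContinuousAt x t := fun t ht => (hx t ht).continuousAt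
  have hyc : ∀ t, 0 ≤ t → ContinuousAt y t := fun t ht => (hy t ht).continuousAt
  have hsq : ∀ v : Fin n → ℝ, Real.sqrt (PX v v) = νX v := by
    intro v; rw [hcomp v, Real.sqrt_sq (hνX.nonneg' v)]
  have hCS : ∀ v w : Fin n → ℝ, PX v w ≤ νX v * νX w := by
    intro v w
    calc PX v w ≤ |PX v w| := le_abs_self _
      _ ≤ Real.sqrt (PX v v) * Real.sqrt (PX w w) := hPX.cauchySchwarz _ _
      _ = νX v * νX w := by rw [hsq, hsq]
  have hbc : ∀ t, 0 ≤ t →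
      ContinuousAt (fun s => f s (x s) (uy s) - f s (y s) (uy s)) t := by
    intro t ht
    have h1 : ContinuousAt (fun s => f s (x s) (uy s)) t := by
      have := hf.continuousAt.comp (ContinuousAt.prodMk (continuousAt_id (x := t)) (ContinuousAt.prodMk (hxc t ht) huy.continuousAt)); exact this
    have h2 : ContinuousAt (fun s => f s (y s) (uy s)) t := by
      have := hf.continuousAt.comp (ContinuousAt.prodMk (continuousAt_id (x := t)) (ContinuousAt.prodMk (hyc t ht) huy.continuousAt)); exact this
    exact h1.sub h2
  have main : ∀ t, 0 ≤ t →
      (DiniUpper (fun s => νX (x s - y s)) t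
        ≤ -c * νX (x t - y t) + ℓ * νU (ux t - uy t)) ∧
      (∀ r, -c * νX (x t - y t) + ℓ * νU (ux t - uy t) < r →
        ∀ᶠ h in nhdsWithin (0:ℝ) (Set.Ioi 0),
          (νX (x (t+h) - y (t+h)) - νX (x t - y t)) / h < r) := by
    intro t ht
    set z' : Fin n → ℝ := f t (x t) (ux t) - f t (y t) (uy t) with hz'
    have hzd : HasDerivAt (fun s => x s - y s) z' t := (hx t ht).sub (hy t ht)
    have key : ∀ h : ℝ, 0 < h →
        νX (x (t+h) - y (t+h)) ≤
          (νX (x t - y t) +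
            νX ((x (t+h) - y (t+h)) - (x t - y t) -
              h • (f (t+h) (x (t+h)) (uy (t+h)) - f (t+h) (y (t+h)) (uy (t+h)))))
            / (1 + c * h) := by
      intro h hh
      set w : Fin n → ℝ := x (t+h) - y (t+h) with hw
      set zt : Fin n → ℝ := x t - y t with hzt
      set bt : Fin n → ℝ := f (t+h) (x (t+h)) (uy (t+h)) - f (t+h) (y (t+h)) (uy (t+h)) with hbt
      set E : Fin n → ℝ := w - zt - h • bt with hE
      have hden : (0:ℝ) < 1 + c * h := by positivity
      have c1 : PX w w ≤ PX zt w + PX (w - zt) w := by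
        have := hPX.subadd zt (w - zt) w
        rwa [add_sub_cancel] at this
      have c2 : PX zt w ≤ νX zt * νX w := hCS _ _
      have c3 : PX (w - zt) w ≤ h * PX bt w + PX E w := by
        have h1 := hPX.subadd (h • bt) E w
        rw [show h • bt + E = w - zt by rw [hE]; abel] at h1
        rwa [hPX.homog_left h hh.le] at h1
      have c4 : PX bt w ≤ -c * νX w ^ 2 :=
        hA1 (t+h) (by linarith) (x (t+h)) (y (t+h)) (uy (t+h))
      have c5 : PX E w ≤ νX E * νX w := hCS _ _
      have hPww : PX w w = νX w ^ 2 := hcomp w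
      have c6 : (1 + c * h) * νX w ^ 2 ≤ (νX zt + νX E) * νX w := by
        nlinarith [mul_le_mul_of_nonneg_left c4 hh.le]
      rcases (eq_or_lt_of_le (hνX.nonneg' w)).imp Eq.symm id with h0 | h0
      · rw [h0]
        exact div_nonneg (add_nonneg (hνX.nonneg' zt) (hνX.nonneg' E)) hden.le
      · rw [le_div_iff₀ hden]
        nlinarith
    set ψ : ℝ → ℝ := fun h =>
      (νX (h⁻¹ • ((x (t+h) - y (t+h)) - (x t - y t)) - z')
        + νX (z' - (f (t+h) (x (t+h)) (uy (t+h)) - f (t+h) (y (t+h)) (uy (t+h))))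
        - c * νX (x t - y t)) / (1 + c * h) with hψ
    have slope_le : ∀ h : ℝ, 0 < h →
        (νX (x (t+h) - y (t+h)) - νX (x t - y t)) / h ≤ ψ h := by
      intro h hh
      have hden : (0:ℝ) < 1 + c * h := by positivity
      have hEle : νX ((x (t+h) - y (t+h)) - (x t - y t) -
            h • (f (t+h) (x (t+h)) (uy (t+h)) - f (t+h) (y (t+h)) (uy (t+h))))
          ≤ h * (νX (h⁻¹ • ((x (t+h) - y (t+h)) - (x t - y t)) - z')
              + νX (z' - (f (t+h) (x (t+h)) (uy (t+h)) - f (t+h) (y (t+h)) (uy (t+h))))) := by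
        have hrepr : (x (t+h) - y (t+h)) - (x t - y t) -
            h • (f (t+h) (x (t+h)) (uy (t+h)) - f (t+h) (y (t+h)) (uy (t+h)))
            = h • (h⁻¹ • ((x (t+h) - y (t+h)) - (x t - y t)) - z')
              + h • (z' - (f (t+h) (x (t+h)) (uy (t+h)) - f (t+h) (y (t+h)) (uy (t+h)))) := by
          rw [smul_sub, smul_sub, smul_inv_smul₀ (ne_of_gt hh), hz']
          module
        rw [hrepr]
        have h1 := hνX.triangle (h • (h⁻¹ • ((x (t+h) - y (t+h)) - (x t - y t)) - z'))
          (h • (z' - (f (t+h) (x (t+h)) (uy (t+h)) - f (t+h) (y (t+h)) (uy (t+h)))))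
        rw [hνX.homog, hνX.homog, abs_of_pos hh] at h1
        linarith
      have hkey' := (le_div_iff₀ hden).1 (key h hh)
      show (νX (x (t+h) - y (t+h)) - νX (x t - y t)) / h ≤
        (νX (h⁻¹ • ((x (t+h) - y (t+h)) - (x t - y t)) - z')
          + νX (z' - (f (t+h) (x (t+h)) (uy (t+h)) - f (t+h) (y (t+h)) (uy (t+h))))
          - c * νX (x t - y t)) / (1 + c * h)
      rw [div_le_div_iff₀ hh hden]
      nlinarith [hkey', hEle]
    have hslope : Filter.Tendsto (fun h : ℝ => h⁻¹ • ((x (t+h) - y (t+h)) - (x t - y t)))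
        (nhdsWithin 0 (Set.Ioi 0)) (nhds z') := by
      have h1 := hasDerivAt_iff_tendsto_slope_zero.1 hzd
      exact h1.mono_left
        (nhdsWithin_mono _ fun a ha => Set.mem_compl_singleton_iff.mpr (ne_of_gt ha))
    have hadd : Filter.Tendsto (fun h : ℝ => t + h) (nhdsWithin (0:ℝ) (Set.Ioi 0)) (nhds t) := by
      have h1 : Filter.Tendsto (fun h : ℝ => t + h) (nhds 0) (nhds (t + 0)) :=
        (continuous_const.add continuous_id).tendsto 0
      rw [add_zero] at h1
      exact h1.mono_left nhdsWithin_le_nhds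
    have hAt : Filter.Tendsto (fun h : ℝ => νX (h⁻¹ • ((x (t+h) - y (t+h)) - (x t - y t)) - z'))
        (nhdsWithin 0 (Set.Ioi 0)) (nhds 0) := by
      have h1 : Filter.Tendsto (fun h : ℝ => h⁻¹ • ((x (t+h) - y (t+h)) - (x t - y t)) - z')
          (nhdsWithin 0 (Set.Ioi 0)) (nhds (z' - z')) := hslope.sub_const z'
      rw [sub_self] at h1
      have h2 := (hνXc.tendsto (0 : Fin n → ℝ)).comp h1
      rwa [hνX0] at h2
    have hBt : Filter.Tendsto
        (fun h : ℝ => νX (z' - (f (t+h) (x (t+h)) (uy (t+h)) - f (t+h) (y (t+h)) (uy (t+h)))))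
        (nhdsWithin 0 (Set.Ioi 0))
        (nhds (νX (z' - (f t (x t) (uy t) - f t (y t) (uy t))))) := by
      have h1 : Filter.Tendsto
          (fun h : ℝ => f (t+h) (x (t+h)) (uy (t+h)) - f (t+h) (y (t+h)) (uy (t+h)))
          (nhdsWithin 0 (Set.Ioi 0)) (nhds (f t (x t) (uy t) - f t (y t) (uy t))) :=
        ((hbc t ht).tendsto).comp hadd
      exact (hνXc.tendsto _).comp (tendsto_const_nhds.sub h1)
    have hdenT : Filter.Tendsto (fun h : ℝ => 1 + c * h) (nhdsWithin (0:ℝ) (Set.Ioi 0))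
        (nhds (1 + c * 0)) := by
      have h1 : Filter.Tendsto (fun h : ℝ => 1 + c * h) (nhds (0:ℝ)) (nhds (1 + c * 0)) :=
        (continuous_const.add (continuous_const.mul continuous_id)).tendsto 0
      exact h1.mono_left nhdsWithin_le_nhds
    have hψt : Filter.Tendsto ψ (nhdsWithin 0 (Set.Ioi 0))
        (nhds (νX (z' - (f t (x t) (uy t) - f t (y t) (uy t))) - c * νX (x t - y t))) := by
      have h1 := ((hAt.add hBt).sub_const (c * νX (x t - y t))).div hdenT (by norm_num)
      rw [hψ]
      convert h1 using 2
      all_goals norm_num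
    have hL : νX (z' - (f t (x t) (uy t) - f t (y t) (uy t))) - c * νX (x t - y t)
        ≤ ℓ * νU (ux t - uy t) - c * νX (x t - y t) := by
      have he : z' - (f t (x t) (uy t) - f t (y t) (uy t))
          = f t (x t) (ux t) - f t (x t) (uy t) := by rw [hz']; abel
      have := hA2 t ht (x t) (ux t) (uy t)
      rw [he]
      linarith
    have hev : ∀ᶠ h in nhdsWithin (0:ℝ) (Set.Ioi 0),
        (νX (x (t+h) - y (t+h)) - νX (x t - y t)) / h ≤ ψ h :=
      eventually_nhdsWithin_of_forall fun h hh => slope_le h hh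
    have hη : Filter.Tendsto (fun h : ℝ => -νX (h⁻¹ • ((x (t+h) - y (t+h)) - (x t - y t))))
        (nhdsWithin 0 (Set.Ioi 0)) (nhds (-νX z')) :=
      ((hνXc.tendsto _).comp hslope).neg
    have hlb : ∀ᶠ h in nhdsWithin (0:ℝ) (Set.Ioi 0),
        -νX (h⁻¹ • ((x (t+h) - y (t+h)) - (x t - y t)))
          ≤ (νX (x (t+h) - y (t+h)) - νX (x t - y t)) / h := by
      refine eventually_nhdsWithin_of_forall fun h hh => ?_
      have h1 : νX (x t - y t) - νX (x (t+h) - y (t+h))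
          ≤ νX ((x (t+h) - y (t+h)) - (x t - y t)) := by
        have := hνX.sub_le' (x t - y t) (x (t+h) - y (t+h))
        rwa [show (x t - y t) - (x (t+h) - y (t+h))
            = -((x (t+h) - y (t+h)) - (x t - y t)) by abel, hνX.neg'] at this
      have h2 : νX (h⁻¹ • ((x (t+h) - y (t+h)) - (x t - y t)))
          = νX ((x (t+h) - y (t+h)) - (x t - y t)) / h := by
        rw [hνX.homog, abs_of_pos (inv_pos.2 hh), inv_mul_eq_div]
      rw [h2, ← neg_div, div_le_div_iff_of_pos_right hh]
      linarith
    have hbddB : Filter.IsBoundedUnder (· ≥ ·) (nhdsWithin (0:ℝ) (Set.Ioi 0))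
        (fun h => (νX (x (t+h) - y (t+h)) - νX (x t - y t)) / h) :=
      (hη.isBoundedUnder_ge).mono_ge hlb
    constructor
    · have hls := Filter.limsup_le_limsup hev (hbddB.isCoboundedUnder_le)
        (hψt.isBoundedUnder_le)
      rw [hψt.limsup_eq] at hls
      calc DiniUpper (fun s => νX (x s - y s)) t
          = Filter.limsup (fun h : ℝ => (νX (x (t+h) - y (t+h)) - νX (x t - y t)) / h)
            (nhdsWithin 0 (Set.Ioi 0)) := rfl
        _ ≤ _ := hls
        _ ≤ _ := by linarith
    · intro r hr
      have h1 : νX (z' - (f t (x t) (uy t) - f t (y t) (uy t))) - c * νX (x t - y t) < r := by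
        linarith
      have h2 : ∀ᶠ h in nhdsWithin (0:ℝ) (Set.Ioi 0), ψ h < r := hψt.eventually_lt_const h1
      filter_upwards [h2, hev] with h hh1 hh2
      linarith
  refine ⟨fun t ht => (main t ht).1, ?_⟩
  intro T hT
  have hgc : Continuous (fun τ => νU (ux τ - uy τ)) := hνUc.comp (hux.sub huy)
  have hSb : BddAbove ((fun τ => νU (ux τ - uy τ)) '' Set.Icc 0 T) :=
    (isCompact_Icc.image hgc).bddAbove
  have hgS : ∀ s ∈ Set.Icc (0:ℝ) T, νU (ux s - uy s)
      ≤ sSup ((fun τ => νU (ux τ - uy τ)) '' Set.Icc 0 T) :=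
    fun s hs => le_csSup hSb ⟨s, hs, rfl⟩
  have hφcont : ContinuousOn (fun s => νX (x s - y s)) (Set.Icc 0 T) := by
    intro s hs
    exact (hνXc.continuousAt.comp ((hxc s hs.1).sub (hyc s hs.1))).continuousWithinAt
  have hf' : ∀ s ∈ Set.Ico (0:ℝ) T, ∀ r,
      -c * νX (x s - y s) + ℓ * sSup ((fun τ => νU (ux τ - uy τ)) '' Set.Icc 0 T) < r →
      ∃ᶠ ζ in nhdsWithin s (Set.Ioi s),
        (ζ - s)⁻¹ * (νX (x ζ - y ζ) - νX (x s - y s)) < r := by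
    intro s hs r hr
    have h0 : -c * νX (x s - y s) + ℓ * νU (ux s - uy s) < r := by
      have h1 := hgS s ⟨hs.1, hs.2.le⟩
      have h2 := mul_le_mul_of_nonneg_left h1 hℓ.le
      linarith
    have hev := (main s hs.1).2 r h0
    have hmap : Filter.Tendsto (fun ζ : ℝ => ζ - s) (nhdsWithin s (Set.Ioi s))
        (nhdsWithin (0:ℝ) (Set.Ioi 0)) := by
      refine tendsto_nhdsWithin_of_tendsto_nhds_of_eventually_within _ ?_ ?_
      · have h1 : Filter.Tendsto (fun ζ : ℝ => ζ - s) (nhds s) (nhds (s - s)) :=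
          (continuous_id.sub continuous_const).tendsto s
        rw [sub_self] at h1
        exact h1.mono_left nhdsWithin_le_nhds
      · exact eventually_nhdsWithin_of_forall fun ζ hζ => Set.mem_Ioi.2 (sub_pos.2 hζ)
    have h3 := hmap.eventually hev
    refine (h3.mono ?_).frequently
    intro ζ hζ
    rw [show s + (ζ - s) = ζ by ring, div_eq_inv_mul] at hζ
    exact hζ
  have hbound : ∀ s ∈ Set.Ico (0:ℝ) T,
      -c * νX (x s - y s) + ℓ * sSup ((fun τ => νU (ux τ - uy τ)) '' Set.Icc 0 T)
      ≤ -c * νX (x s - y s) + ℓ * sSup ((fun τ => νU (ux τ - uy τ)) '' Set.Icc 0 T) :=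
    fun s _ => le_rfl
  have hgron := le_gronwallBound_of_liminf_deriv_right_le hφcont hf' le_rfl hbound T
    (Set.right_mem_Icc.2 hT)
  rw [gronwallBound_of_K_ne_0 (neg_ne_zero.2 (ne_of_gt hc))] at hgron
  simp only [sub_zero] at hgron
  have heq : νX (x 0 - y 0) * Real.exp (-c * T)
      + ℓ * sSup ((fun τ => νU (ux τ - uy τ)) '' Set.Icc 0 T) / (-c) * (Real.exp (-c * T) - 1)
      = Real.exp (-c * T) * νX (x 0 - y 0)
        + ℓ * (1 - Real.exp (-c * T)) / c
          * sSup ((fun τ => νU (ux τ - uy τ)) '' Set.Icc 0 T) := by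
    have hc' : c ≠ 0 := ne_of_gt hc
    have h : ℓ * sSup ((fun τ => νU (ux τ - uy τ)) '' Set.Icc 0 T) / (-c) * (Real.exp (-c * T) - 1)
        = ℓ * (1 - Real.exp (-c * T)) / c * sSup ((fun τ => νU (ux τ - uy τ)) '' Set.Icc 0 T) := by
      rw [div_mul_eq_mul_div, div_mul_eq_mul_div, div_eq_div_iff (neg_ne_zero.2 hc') hc']
      ring
    rw [h]; ring
  rw [heq] at hgron
  exact hgron
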